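/- (Single fusion of the HT-model increases entropy.) Let U, V, W, Y be random variables on a probability space taking values in finite sets. Assume (i) U and V are conditionally independent given W, (ii) U and W are conditionally independent given Y, and (iii) V and W are conditionally independent given Y. Then H((U,V) | W) ≥ H(U | Y) + H(V | Y). -/

import Mathlib

open MeasureTheory

noncomputable def pr {Ω : Type*} [MeasurableSpace Ω] (μ : Measure Ω) (s : Set Ω) : ℝ :=
  (μ s).toReal

/-- Conditional entropy `H(X|Y) = Σ_y P(Y=y) · (-Σ_x P(X=x|Y=y) log P(X=x|Y=y))`. -/
noncomputable def condEntropy {Ω A B : Type*} [MeasurableSpace Ω] [Fintype A] [Fintype B]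
    (μ : Measure Ω) (X : Ω → A) (Y : Ω → B) : ℝ :=
  ∑ y : B, pr μ {ω | Y ω = y} *
    (-∑ x : A, (pr μ {ω | X ω = x ∧ Y ω = y} / pr μ {ω | Y ω = y}) *
      Real.log (pr μ {ω | X ω = x ∧ Y ω = y} / pr μ {ω | Y ω = y}))

/-! Conditional independence of `U` and `V` given `W` splits `H((U,V) | W)` into
`H(U | W) + H(V | W)`, because `negMulLog (a * b) = b * negMulLog a + a * negMulLog b` and the
conditional laws sum to one. Conditional independence of `U` and `W` given `Y` makes the law of
`U` given `W = w` the mixture, with weights `P(Y = y | W = w)`, of the laws of `U` given `Y = y`;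
concavity of `negMulLog` then gives `H(U | Y) ≤ H(U | W)`, and likewise for `V`. -/

open Real

def CondIndepPr {Ω A B C : Type*} [MeasurableSpace Ω] (μ : Measure Ω)
    (X : Ω → A) (Z : Ω → B) (Y : Ω → C) : Prop :=
  ∀ x z y, 0 < pr μ {ω | Y ω = y} →
    pr μ {ω | (X ω = x ∧ Z ω = z) ∧ Y ω = y} / pr μ {ω | Y ω = y} =
      (pr μ {ω | X ω = x ∧ Y ω = y} / pr μ {ω | Y ω = y}) *
        (pr μ {ω | Z ω = z ∧ Y ω = y} / pr μ {ω | Y ω = y})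

lemma sum_sum_negMulLog_mul {ι κ : Type*} (s : Finset ι) (t : Finset κ) {a : ι → ℝ} {b : κ → ℝ}
    (ha : ∑ i ∈ s, a i = 1) (hb : ∑ j ∈ t, b j = 1) :
    ∑ i ∈ s, ∑ j ∈ t, negMulLog (a i * b j) =
      ∑ i ∈ s, negMulLog (a i) + ∑ j ∈ t, negMulLog (b j) := by
  simp only [negMulLog_mul, Finset.sum_add_distrib, ← Finset.sum_mul, ← Finset.mul_sum, hb,
    one_mul]
  rw [ha, one_mul]

lemma sum_mul_negMulLog_le {ι : Type*} (s : Finset ι) {a p : ι → ℝ}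
    (ha : ∀ i ∈ s, 0 ≤ a i) (hp : ∀ i ∈ s, 0 ≤ p i) :
    ∑ i ∈ s, a i * negMulLog (p i) ≤
      (∑ i ∈ s, a i) * negMulLog ((∑ i ∈ s, a i * p i) / ∑ i ∈ s, a i) := by
  rcases (Finset.sum_nonneg ha).eq_or_lt with hS | hS
  · rw [← hS, zero_mul]
    refine (Finset.sum_eq_zero fun i hi => ?_).le
    rw [(Finset.sum_eq_zero_iff_of_nonneg ha).1 hS.symm i hi, zero_mul]
  · have jensen := concaveOn_negMulLog.le_map_sum (t := s) (p := p)
      (w := fun i => a i / ∑ i ∈ s, a i) (fun i hi => div_nonneg (ha i hi) hS.le)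
      (by rw [← Finset.sum_div, div_self hS.ne']) hp
    simp only [smul_eq_mul, div_mul_eq_mul_div, ← Finset.sum_div] at jensen
    rwa [← mul_le_mul_iff_right₀ hS, mul_div_cancel₀ _ hS.ne'] at jensen

section

variable {Ω : Type*} [MeasurableSpace Ω] {μ : Measure Ω}

lemma pr_nonneg (s : Set Ω) : 0 ≤ pr μ s := ENNReal.toReal_nonneg

lemma condEntropy_eq_sum_negMulLog {A B : Type*} [Fintype A] [Fintype B] (X : Ω → A) (Y : Ω → B) :
    condEntropy μ X Y = ∑ y, ∑ x, pr μ {ω | Y ω = y} *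
      negMulLog (pr μ {ω | X ω = x ∧ Y ω = y} / pr μ {ω | Y ω = y}) := by
  simp only [condEntropy, negMulLog, Finset.mul_sum, ← Finset.sum_neg_distrib, neg_mul,
    mul_neg]

variable [IsFiniteMeasure μ]

lemma pr_eq_zero_of_subset {s t : Set Ω} (hst : s ⊆ t) (ht : pr μ t = 0) : pr μ s = 0 :=
  le_antisymm (ht ▸ ENNReal.toReal_mono (measure_ne_top μ t) (measure_mono hst)) (pr_nonneg s)

lemma sum_pr_and_eq {C : Type*} [Fintype C] [MeasurableSpace C] [MeasurableSingletonClass C]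
    {g : Ω → C} (hg : Measurable g) (P : Ω → Prop) :
    ∑ c, pr μ {ω | P ω ∧ g ω = c} = pr μ {ω | P ω} := by
  have hfib : ∀ c, μ {ω | P ω ∧ g ω = c} = μ.restrict {ω | P ω} (g ⁻¹' {c}) := fun c => by
    rw [Measure.restrict_apply (hg (measurableSet_singleton c)), Set.inter_comm]; rfl
  simp only [pr]
  rw [← ENNReal.toReal_sum fun c _ => measure_ne_top μ _]
  simp only [hfib, sum_measure_preimage_singleton _ fun c _ => hg (measurableSet_singleton c),
    Finset.coe_univ, Set.preimage_univ, Measure.restrict_apply_univ]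

lemma sum_pr_eq_and {C : Type*} [Fintype C] [MeasurableSpace C] [MeasurableSingletonClass C]
    {g : Ω → C} (hg : Measurable g) (P : Ω → Prop) :
    ∑ c, pr μ {ω | g ω = c ∧ P ω} = pr μ {ω | P ω} := by
  simp only [and_comm (a := g _ = _), sum_pr_and_eq hg P]

lemma sum_condPr_eq_one {A B : Type*} [Fintype A] [MeasurableSpace A] [MeasurableSingletonClass A]
    {X : Ω → A} (hX : Measurable X) (Y : Ω → B) {y : B} (hy : pr μ {ω | Y ω = y} ≠ 0) :
    ∑ x, pr μ {ω | X ω = x ∧ Y ω = y} / pr μ {ω | Y ω = y} = 1 := by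
  rw [← Finset.sum_div, sum_pr_eq_and hX, div_self hy]

lemma condEntropy_prod_eq_add {A B G : Type*}
    [Fintype A] [MeasurableSpace A] [MeasurableSingletonClass A]
    [Fintype B] [MeasurableSpace B] [MeasurableSingletonClass B] [Fintype G]
    {U : Ω → A} {V : Ω → B} {W : Ω → G} (hU : Measurable U) (hV : Measurable V)
    (h : CondIndepPr μ U V W) :
    condEntropy μ (fun ω => (U ω, V ω)) W = condEntropy μ U W + condEntropy μ V W := by
  simp only [condEntropy_eq_sum_negMulLog, ← Finset.sum_add_distrib, ← Finset.mul_sum,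
    ← mul_add]
  refine Finset.sum_congr rfl fun w _ => ?_
  rcases (pr_nonneg {ω | W ω = w}).eq_or_lt with hw | hw
  · rw [← hw, zero_mul, zero_mul]
  congr 1
  have hpair : ∀ u v, pr μ {ω | (U ω, V ω) = (u, v) ∧ W ω = w} =
      pr μ {ω | (U ω = u ∧ V ω = v) ∧ W ω = w} := by
    simp only [Prod.mk.injEq, implies_true]
  rw [Fintype.sum_prod_type]
  simp only [hpair, h _ _ w hw]
  exact sum_sum_negMulLog_mul _ _ (sum_condPr_eq_one hU W hw.ne') (sum_condPr_eq_one hV W hw.ne')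

lemma CondIndepPr.pr_and_and_eq {A G D : Type*} {X : Ω → A} {W : Ω → G} {Y : Ω → D}
    (h : CondIndepPr μ X W Y) (x : A) (w : G) (y : D) :
    pr μ {ω | (X ω = x ∧ W ω = w) ∧ Y ω = y} =
      pr μ {ω | W ω = w ∧ Y ω = y} * (pr μ {ω | X ω = x ∧ Y ω = y} / pr μ {ω | Y ω = y}) := by
  rcases (pr_nonneg {ω | Y ω = y}).eq_or_lt with hy | hy
  · rw [← hy, div_zero, mul_zero]
    exact pr_eq_zero_of_subset (fun ω hω => hω.2) hy.symm
  · have hxy := h x w y hy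
    rw [div_eq_iff hy.ne'] at hxy
    rw [hxy]
    field_simp

lemma sum_pr_mul_eq_sum_pr_and_mul {A G D : Type*} [Fintype A]
    [Fintype G] [MeasurableSpace G] [MeasurableSingletonClass G] [Fintype D]
    {W : Ω → G} (hW : Measurable W) (Y : Ω → D) (f : A → D → ℝ) :
    ∑ y, ∑ x, pr μ {ω | Y ω = y} * f x y =
      ∑ w, ∑ x, ∑ y, pr μ {ω | W ω = w ∧ Y ω = y} * f x y := by
  simp only [← sum_pr_eq_and hW (fun ω => Y ω = _), Finset.sum_mul]
  conv_rhs => rw [Finset.sum_comm]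
  rw [Finset.sum_comm]
  exact Finset.sum_congr rfl fun x _ => Finset.sum_comm

lemma condEntropy_le_of_condIndepPr {A G D : Type*} [Fintype A]
    [Fintype G] [MeasurableSpace G] [MeasurableSingletonClass G]
    [Fintype D] [MeasurableSpace D] [MeasurableSingletonClass D]
    {X : Ω → A} {W : Ω → G} {Y : Ω → D} (hW : Measurable W) (hY : Measurable Y)
    (h : CondIndepPr μ X W Y) :
    condEntropy μ X Y ≤ condEntropy μ X W := by
  rw [condEntropy_eq_sum_negMulLog, condEntropy_eq_sum_negMulLog,
    sum_pr_mul_eq_sum_pr_and_mul hW]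
  refine Finset.sum_le_sum fun w _ => Finset.sum_le_sum fun x _ => ?_
  rw [← sum_pr_and_eq hY (fun ω => W ω = w), ← sum_pr_and_eq hY (fun ω => X ω = x ∧ W ω = w)]
  simp only [h.pr_and_and_eq]
  exact sum_mul_negMulLog_le _ (fun _ _ => pr_nonneg _)
    (fun _ _ => div_nonneg (pr_nonneg _) (pr_nonneg _))
end

/-- A single fusion of the HT-model increases entropy. If `U` and `V` are
conditionally independent given `W`, `U` and `W` are conditionally independent given `Y`,
and `V` and `W` are conditionally independent given `Y`, then
`H((U,V) | W) ≥ H(U | Y) + H(V | Y)`. -/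
theorem ht_fusion_entropy_increases {Ω A B G D : Type*} [MeasurableSpace Ω]
    (μ : Measure Ω) [IsProbabilityMeasure μ]
    [Fintype A] [MeasurableSpace A] [MeasurableSingletonClass A]
    [Fintype B] [MeasurableSpace B] [MeasurableSingletonClass B]
    [Fintype G] [MeasurableSpace G] [MeasurableSingletonClass G]
    [Fintype D] [MeasurableSpace D] [MeasurableSingletonClass D]
    (U : Ω → A) (V : Ω → B) (W : Ω → G) (Y : Ω → D)
    (hU : Measurable U) (hV : Measurable V) (hW : Measurable W) (hY : Measurable Y)
    (hUV_W : ∀ (u : A) (v : B) (w : G), 0 < pr μ {ω | W ω = w} →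
      pr μ {ω | (U ω = u ∧ V ω = v) ∧ W ω = w} / pr μ {ω | W ω = w} =
        (pr μ {ω | U ω = u ∧ W ω = w} / pr μ {ω | W ω = w}) *
        (pr μ {ω | V ω = v ∧ W ω = w} / pr μ {ω | W ω = w}))
    (hUW_Y : ∀ (u : A) (w : G) (y : D), 0 < pr μ {ω | Y ω = y} →
      pr μ {ω | (U ω = u ∧ W ω = w) ∧ Y ω = y} / pr μ {ω | Y ω = y} =
        (pr μ {ω | U ω = u ∧ Y ω = y} / pr μ {ω | Y ω = y}) *
        (pr μ {ω | W ω = w ∧ Y ω = y} / pr μ {ω | Y ω = y}))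
    (hVW_Y : ∀ (v : B) (w : G) (y : D), 0 < pr μ {ω | Y ω = y} →
      pr μ {ω | (V ω = v ∧ W ω = w) ∧ Y ω = y} / pr μ {ω | Y ω = y} =
        (pr μ {ω | V ω = v ∧ Y ω = y} / pr μ {ω | Y ω = y}) *
        (pr μ {ω | W ω = w ∧ Y ω = y} / pr μ {ω | Y ω = y})) :
    condEntropy μ U Y + condEntropy μ V Y ≤
      condEntropy μ (fun ω => (U ω, V ω)) W := by
  rw [condEntropy_prod_eq_add hU hV hUV_W]
  exact add_le_add (condEntropy_le_of_condIndepPr hW hY hUW_Y)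
    (condEntropy_le_of_condIndepPr hW hY hVW_Y)
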